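/- In any execution of the MD2IS algorithm under a serial central daemon, once a vertex v executes rule R1 (entering S), v is never enabled again: neither R1 (since its state is In) nor R2 (since all vertices at distance ≤ 2 remain Out and cannot become In). -/

import Mathlib

variable {V : Type*} [Fintype V] [DecidableEq V]

/-- `S` is a distance-2 independent set: any two distinct vertices of `S`
are at graph distance strictly greater than 2. -/
def Dist2Indep (G : SimpleGraph V) (S : Set V) : Prop :=
  ∀ u ∈ S, ∀ v ∈ S, u ≠ v → 2 < G.edist u v

/-- `exp G s u` counts the neighbors of `u` whose state is `In` (`true`). -/
def expIn (G : SimpleGraph V) [DecidableRel G.Adj] (s : V → Bool) (u : V) : ℕ :=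
  ((G.neighborFinset u).filter (fun w => s w = true)).card

/-- Guard of rule R1 at `v`: `v` is Out and every neighbor is Out with exp 0. -/
def R1guard (G : SimpleGraph V) [DecidableRel G.Adj] (s : V → Bool) (v : V) : Prop :=
  s v = false ∧ ∀ u ∈ G.neighborSet v, s u = false ∧ expIn G s u = 0

/-- Guard of rule R2 at `v`: `v` is In and some neighbor is In or has exp > 1. -/
def R2guard (G : SimpleGraph V) [DecidableRel G.Adj] (s : V → Bool) (v : V) : Prop :=
  s v = true ∧ ∃ u ∈ G.neighborSet v, s u = true ∨ 1 < expIn G s u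
/-- One move of the algorithm: vertex `v` fires R1 (becoming In) or R2 (becoming Out). -/
def Step (G : SimpleGraph V) [DecidableRel G.Adj] (s s' : V → Bool) (v : V) : Prop :=
  (R1guard G s v ∧ s' = Function.update s v true) ∨
  (R2guard G s v ∧ s' = Function.update s v false)

/-!
Right after `v` fires R1, `v` is In and every other vertex within distance two of `v` is Out.
This invariant survives every move. A vertex enabled for R1 sees no In vertex within distance
two, so it lies at distance more than two from `v`; an R2 move only turns a vertex Out, and is
not made by `v` itself. Under the invariant `v` is enabled for neither rule: it is In, and each
of its neighbours is Out with `v` as its only In neighbour, so has exp at most one.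
-/

open Function

def SettledIn (G : SimpleGraph V) (s : V → Bool) (v : V) : Prop :=
  s v = true ∧ ∀ u, G.Adj v u → s u = false ∧ ∀ w, G.Adj u w → w ≠ v → s w = false

theorem Function.update_apply_of_apply_eq {α β : Type*} [DecidableEq α] {f : α → β} {a : α}
    {b : β} (h : f a = b) (x : α) : update f x b a = b := by
  rcases eq_or_ne a x with rfl | hax
  · exact update_self ..
  · rwa [update_of_ne hax]

omit [Fintype V] in
theorem SettledIn.update_false {G : SimpleGraph V} {s : V → Bool} {v x : V}
    (h : SettledIn G s v) (hxv : x ≠ v) : SettledIn G (update s x false) v :=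
  ⟨by rw [update_of_ne hxv.symm]; exact h.1, fun u hu =>
    ⟨update_apply_of_apply_eq (h.2 u hu).1 x, fun w hw hwv =>
      update_apply_of_apply_eq ((h.2 u hu).2 w hw hwv) x⟩⟩

section

variable {G : SimpleGraph V} [DecidableRel G.Adj] {s s' : V → Bool} {u v w x : V}

omit [DecidableEq V] in
theorem expIn_eq_zero_iff : expIn G s u = 0 ↔ ∀ w, G.Adj u w → s w = false := by
  simp [expIn, Finset.filter_eq_empty_iff]

omit [DecidableEq V] in
theorem R1guard.eq_false_of_adj (h : R1guard G s x) (hu : G.Adj x u) : s u = false :=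
  (h.2 u hu).1

omit [DecidableEq V] in
theorem R1guard.eq_false_of_adj_adj (h : R1guard G s x) (hu : G.Adj x u) (hw : G.Adj u w) :
    s w = false :=
  expIn_eq_zero_iff.mp (h.2 u hu).2 w hw

theorem settledIn_update_of_R1guard (h : R1guard G s v) : SettledIn G (update s v true) v := by
  refine ⟨update_self .., fun u hu => ⟨?_, fun w hw hwv => ?_⟩⟩
  · rw [update_of_ne hu.ne']
    exact h.eq_false_of_adj hu
  · rw [update_of_ne hwv]
    exact h.eq_false_of_adj_adj hu hw

namespace SettledIn

theorem expIn_le_one (h : SettledIn G s v) (hu : G.Adj v u) : expIn G s u ≤ 1 := by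
  have hsub : (G.neighborFinset u).filter (fun w => s w = true) ⊆ {v} := by
    intro w hw
    rw [Finset.mem_filter, SimpleGraph.mem_neighborFinset] at hw
    by_contra hwv
    simp [(h.2 u hu).2 w hw.1 (Finset.notMem_singleton.mp hwv)] at hw
  exact (Finset.card_le_card hsub).trans (Finset.card_singleton v).le

omit [DecidableEq V] in
theorem not_R1guard (h : SettledIn G s v) : ¬ R1guard G s v := fun hv =>
  Bool.false_ne_true (hv.1 ▸ h.1)

theorem not_R2guard (h : SettledIn G s v) : ¬ R2guard G s v := by
  rintro ⟨-, u, hu, hIn | hexp⟩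
  · simp [(h.2 u hu).1] at hIn
  · exact (h.expIn_le_one hu).not_gt hexp

theorem update_of_R1guard (h : SettledIn G s v) (hx : R1guard G s x) :
    SettledIn G (update s x true) v := by
  have hIn := h.1
  have hvx : v ≠ x := by
    rintro rfl
    simp [hx.1] at hIn
  refine ⟨by rwa [update_of_ne hvx], fun u hu => ⟨?_, fun w hw hwv => ?_⟩⟩
  · have hux : u ≠ x := by
      rintro rfl
      simp [hx.eq_false_of_adj hu.symm] at hIn
    rw [update_of_ne hux]
    exact (h.2 u hu).1
  · have hwx : w ≠ x := by
      rintro rfl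
      simp [hx.eq_false_of_adj_adj hw.symm hu.symm] at hIn
    rw [update_of_ne hwx]
    exact (h.2 u hu).2 w hw hwv

theorem step (h : SettledIn G s v) (hs : Step G s s' x) : SettledIn G s' v := by
  rcases hs with ⟨hx, rfl⟩ | ⟨hx, rfl⟩
  · exact h.update_of_R1guard hx
  · exact h.update_false (by rintro rfl; exact h.not_R2guard hx)

end SettledIn

end

theorem stmt_8_general (G : SimpleGraph V) [DecidableRel G.Adj]
    (T : ℕ) (c : ℕ → V → Bool) (mv : ℕ → V)
    (hstep : ∀ i < T, Step G (c i) (c (i + 1)) (mv i))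
    (i : ℕ) (v : V)
    (hR1 : R1guard G (c i) v ∧ c (i + 1) = Function.update (c i) v true) :
    ∀ j, i < j → j ≤ T → ¬ R1guard G (c j) v ∧ ¬ R2guard G (c j) v := by
  have hsettled : ∀ j, i + 1 ≤ j → j ≤ T → SettledIn G (c j) v := by
    intro j hj
    induction j, hj using Nat.le_induction with
    | base => exact fun _ => hR1.2 ▸ settledIn_update_of_R1guard hR1.1
    | succ n _ ih => exact fun hnT => (ih (by omega)).step (hstep n (by omega))
  intro j hij hjT
  exact ⟨(hsettled j hij hjT).not_R1guard, (hsettled j hij hjT).not_R2guard⟩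

theorem stmt_8 (G : SimpleGraph V) [DecidableRel G.Adj]
    (T : ℕ) (c : ℕ → V → Bool) (mv : ℕ → V)
    (hstep : ∀ i < T, Step G (c i) (c (i + 1)) (mv i))
    (i : ℕ) (hi : i < T) (v : V) (hv : mv i = v)
    (hR1 : R1guard G (c i) v ∧ c (i + 1) = Function.update (c i) v true) :
    ∀ j, i < j → j ≤ T → ¬ R1guard G (c j) v ∧ ¬ R2guard G (c j) v :=
  stmt_8_general G T c mv hstep i v hR1
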